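/- Let ≤ be a partial order on Sub(G) refining inclusion, and let ⟩≤⟨ be the relation defined by (K,H) ∈ ⟩≤⟨ iff K ⊆ H and gKg⁻¹ ∩ L ≤ L for all g ∈ G and all L ⊆ gHg⁻¹. Then ⟩≤⟨ refines ≤, and every G-transfer system that refines ≤ also refines ⟩≤⟨; hence ⟩≤⟨ is the largest G-transfer system contained in ≤. -/
import Mathlib


/-- Conjugation of a subgroup: `gKg⁻¹`. -/
def conjSub {G : Type*} [Group G] (g : G) (K : Subgroup G) : Subgroup G :=
  Subgroup.map (MulAut.conj g).toMonoidHom K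

/-- A `G`-transfer system: a partial order on subgroups refining inclusion,
closed under conjugation and restriction. -/
def IsTransferSystem {G : Type*} [Group G] (R : Subgroup G → Subgroup G → Prop) : Prop :=
  (∀ H, R H H) ∧
  (∀ ⦃K H⦄, R K H → R H K → K = H) ∧
  (∀ ⦃K J H⦄, R K J → R J H → R K H) ∧
  (∀ ⦃K H⦄, R K H → K ≤ H) ∧
  (∀ ⦃K H⦄ (g : G), R K H → R (conjSub g K) (conjSub g H)) ∧
  (∀ ⦃K H⦄, R K H → ∀ ⦃L⦄, L ≤ H → R (L ⊓ K) L)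

/-- `TL` is the transfer system generated by the relation `R`:
the least transfer system containing `R`. -/
def IsGenBy {G : Type*} [Group G] (TL R : Subgroup G → Subgroup G → Prop) : Prop :=
  IsTransferSystem TL ∧ (∀ K H, R K H → TL K H) ∧
    ∀ T, IsTransferSystem T → (∀ K H, R K H → T K H) → ∀ K H, TL K H → T K H

lemma conjSub_mem {G : Type*} [Group G] (g : G) (K : Subgroup G) (x : G) :
    x ∈ conjSub g K ↔ g⁻¹ * x * g ∈ K := by
  constructor
  · rintro ⟨y, hy, rfl⟩
    simpa [MulAut.conj_apply, mul_assoc] using hy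
  · intro h
    refine ⟨g⁻¹ * x * g, h, ?_⟩
    simp only [MulEquiv.coe_toMonoidHom, MulAut.conj_apply]
    group

lemma conjSub_one {G : Type*} [Group G] (K : Subgroup G) : conjSub 1 K = K := by
  ext x; simp [conjSub_mem]

lemma conjSub_mul {G : Type*} [Group G] (g h : G) (K : Subgroup G) :
    conjSub g (conjSub h K) = conjSub (g * h) K := by
  ext x; simp only [conjSub_mem, mul_inv_rev]; group

lemma conjSub_mono {G : Type*} [Group G] (g : G) {K H : Subgroup G} (h : K ≤ H) :
    conjSub g K ≤ conjSub g H := fun x hx => by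
  rw [conjSub_mem] at *; exact h hx

lemma conjSub_inf {G : Type*} [Group G] (g : G) (K H : Subgroup G) :
    conjSub g (K ⊓ H) = conjSub g K ⊓ conjSub g H := by
  ext x; simp [conjSub_mem, Subgroup.mem_inf]

theorem stmt3 {G : Type*} [Group G] [Finite G]
    (le : Subgroup G → Subgroup G → Prop)
    (hrefl : ∀ H, le H H)
    (hanti : ∀ K H, le K H → le H K → K = H)
    (htrans : ∀ K J H, le K J → le J H → le K H)
    (hsub : ∀ K H, le K H → K ≤ H) :
    IsTransferSystem (fun K H => K ≤ H ∧
      ∀ (g : G) (L : Subgroup G), L ≤ conjSub g H → le (conjSub g K ⊓ L) L) ∧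
    (∀ K H, (K ≤ H ∧
      ∀ (g : G) (L : Subgroup G), L ≤ conjSub g H → le (conjSub g K ⊓ L) L) → le K H) ∧
    (∀ T : Subgroup G → Subgroup G → Prop, IsTransferSystem T →
      (∀ K H, T K H → le K H) →
      ∀ K H, T K H → (K ≤ H ∧
        ∀ (g : G) (L : Subgroup G), L ≤ conjSub g H → le (conjSub g K ⊓ L) L)) := by
  refine ⟨⟨?_, ?_, ?_, ?_, ?_, ?_⟩, ?_, ?_⟩
  · -- refl
    intro H
    refine ⟨le_refl H, fun g L hL => ?_⟩
    rw [inf_eq_right.mpr hL]; exact hrefl L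
  · -- antisymm
    rintro K H ⟨h1, _⟩ ⟨h2, _⟩
    exact le_antisymm h1 h2
  · -- trans
    rintro K J H ⟨hKJ, h1⟩ ⟨hJH, h2⟩
    refine ⟨le_trans hKJ hJH, fun g L hL => ?_⟩
    have hJL : le (conjSub g J ⊓ L) L := h2 g L hL
    have hL' : conjSub g J ⊓ L ≤ conjSub g J := inf_le_left
    have hKL : le (conjSub g K ⊓ (conjSub g J ⊓ L)) (conjSub g J ⊓ L) := h1 g _ hL'
    have : conjSub g K ⊓ (conjSub g J ⊓ L) = conjSub g K ⊓ L := by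
      rw [← inf_assoc, inf_eq_left.mpr (conjSub_mono g hKJ)]
    rw [this] at hKL
    exact htrans _ _ _ hKL hJL
  · -- refines inclusion
    rintro K H ⟨h1, _⟩; exact h1
  · -- conjugation
    rintro K H g ⟨h1, h2⟩
    refine ⟨conjSub_mono g h1, fun g' L hL => ?_⟩
    rw [conjSub_mul] at hL ⊢
    exact h2 (g' * g) L hL
  · -- restriction
    rintro K H ⟨h1, h2⟩ L hLH
    refine ⟨inf_le_left, fun g M hM => ?_⟩
    have hM' : M ≤ conjSub g H := le_trans hM (conjSub_mono g hLH)
    have := h2 g M hM'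
    have heq : conjSub g (L ⊓ K) ⊓ M = conjSub g K ⊓ M := by
      rw [conjSub_inf, inf_assoc, inf_comm (conjSub g K) M, ← inf_assoc,
        inf_eq_right.mpr hM, inf_comm]
    rw [heq]; exact this
  · -- refines le
    rintro K H ⟨h1, h2⟩
    have := h2 1 H (by rw [conjSub_one])
    rwa [conjSub_one, inf_eq_left.mpr h1] at this
  · -- every transfer system refining le refines it
    rintro T ⟨_, _, _, Tsub, Tconj, Tres⟩ hTle K H hKH
    refine ⟨Tsub hKH, fun g L hL => ?_⟩
    have h1 : T (conjSub g K) (conjSub g H) := Tconj g hKH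
    have h2 : T (L ⊓ conjSub g K) L := Tres h1 hL
    rw [inf_comm] at h2
    exact hTle _ _ h2
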